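/- arXiv:1812.00885 — 3 statements merged into one kernel-verified Lean document; each statement's English description precedes it below -/
import Mathlib

section
/- Let G : ℝⁿ → ℝⁿ be a γ-contraction in the ℓ∞ norm (0 < γ < 1) with fixed point x*. Consider an asynchronous coordinate-update sequence x(t) where at each time t a subset of coordinates is updated via x_i(t+1) = G_i(x̂(t)) with x̂_j(t) = x_j(τ_j(t)), and other coordinates are unchanged. Assume partial asynchronism: (a) each coordinate i is updated at least once in every window {t, …, t+B₁−1}; (b) delays satisfy t − B₂ < τ_j(t) ≤ t. Then for all t ≥ B₁, ‖x(t) − x*‖∞ ≤ ‖x(0) − x*‖∞ · ρ^{t − 2B₁}, where ρ = γ^{1/(B₁+B₂−1)}. -/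
/-!
Write `e_i(s) = |x_i(s) - x*_i|` and `m = B₁ + B₂ - 1`. Since `G` contracts towards `x*` in the
sup norm, an update of coordinate `i` that reads only values within `c` of `x*` lands within `γ c`
of `x*`, and a coordinate that is not updated keeps its error. Hence all errors stay below
`D = ‖x(0) - x*‖`, and if every error is at most `c` from time `T` on, then from time
`T + m` on every error is at most `γ c`: by then each coordinate has been updated at least once
after time `T + B₂ - 1`, and every read made after that time is not older than `T`.
Iterating, after a first block of length `B₁` (no read precedes time `0`), gives the error bound
`γ ^ (k + 1) D` from time `B₁ + k m` on.
-/

def IsAsyncIteration {ι : Type*} (G : (ι → ℝ) → ι → ℝ) (x : ℕ → ι → ℝ) (τ : ι → ℕ → ℕ)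
    (𝒯 : ι → Set ℕ) : Prop :=
  ∀ t i, (t ∈ 𝒯 i → x (t + 1) i = G (fun j => x (τ j t) j) i) ∧ (t ∉ 𝒯 i → x (t + 1) i = x t i)

section AsyncIteration

variable {ι : Type*} [Fintype ι] {G : (ι → ℝ) → ι → ℝ} {γ : ℝ} {xstar : ι → ℝ}
  {x : ℕ → ι → ℝ} {τ : ι → ℕ → ℕ} {𝒯 : ι → Set ℕ}

theorem norm_apply_sub_le_of_pseudoContraction (hγ : 0 ≤ γ)
    (hG : ∀ u, ‖G u - xstar‖ ≤ γ * ‖u - xstar‖) {u : ι → ℝ} {c : ℝ} (hc : 0 ≤ c)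
    (hu : ∀ j, ‖u j - xstar j‖ ≤ c) (i : ι) : ‖G u i - xstar i‖ ≤ γ * c :=
  calc ‖G u i - xstar i‖ ≤ ‖G u - xstar‖ := norm_le_pi_norm (G u - xstar) i
    _ ≤ γ * ‖u - xstar‖ := hG u
    _ ≤ γ * c := by gcongr; exact (pi_norm_le_iff_of_nonneg hc).2 hu

theorem IsAsyncIteration.norm_apply_sub_le_initial (hx : IsAsyncIteration G x τ 𝒯)
    (hγ0 : 0 ≤ γ) (hγ1 : γ ≤ 1) (hG : ∀ u, ‖G u - xstar‖ ≤ γ * ‖u - xstar‖)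
    (hτ : ∀ j t, τ j t ≤ t) (s : ℕ) (i : ι) : ‖x s i - xstar i‖ ≤ ‖x 0 - xstar‖ := by
  induction s using Nat.strong_induction_on generalizing i with
  | _ s ih =>
    rcases s with _ | s
    · exact norm_le_pi_norm (x 0 - xstar) i
    by_cases hs : s ∈ 𝒯 i
    · rw [(hx s i).1 hs]
      calc _ ≤ γ * ‖x 0 - xstar‖ := norm_apply_sub_le_of_pseudoContraction hγ0 hG
              (norm_nonneg _) (fun j => ih _ (Nat.lt_succ_of_le (hτ j s)) j) i
        _ ≤ ‖x 0 - xstar‖ := mul_le_of_le_one_left (norm_nonneg _) hγ1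
    · rw [(hx s i).2 hs]
      exact ih s s.lt_succ_self i

theorem IsAsyncIteration.norm_apply_sub_le_of_updated (hx : IsAsyncIteration G x τ 𝒯)
    (hγ : 0 ≤ γ) (hG : ∀ u, ‖G u - xstar‖ ≤ γ * ‖u - xstar‖) {T : ℕ} {c : ℝ} (hc : 0 ≤ c)
    (hbd : ∀ r, T ≤ r → ∀ j, ‖x r j - xstar j‖ ≤ c) {i : ι} {u s : ℕ} (hu : u ∈ 𝒯 i)
    (hus : u < s) (hτ : ∀ s', u ≤ s' → s' < s → ∀ j, T ≤ τ j s') :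
    ‖x s i - xstar i‖ ≤ γ * c := by
  induction s, hus using Nat.le_induction with
  | base =>
    rw [(hx u i).1 hu]
    exact norm_apply_sub_le_of_pseudoContraction hγ hG hc
      (fun j => hbd _ (hτ u le_rfl u.lt_succ_self j) j) i
  | succ s hus ih =>
    by_cases hs : s ∈ 𝒯 i
    · rw [(hx s i).1 hs]
      exact norm_apply_sub_le_of_pseudoContraction hγ hG hc
        (fun j => hbd _ (hτ s (by omega) s.lt_succ_self j) j) i
    · rw [(hx s i).2 hs]
      exact ih fun s' h₁ h₂ => hτ s' h₁ (by omega)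

theorem IsAsyncIteration.norm_apply_sub_le_of_window (hx : IsAsyncIteration G x τ 𝒯)
    (hγ : 0 ≤ γ) (hG : ∀ u, ‖G u - xstar‖ ≤ γ * ‖u - xstar‖) {B₁ : ℕ} (hB₁ : 0 < B₁)
    (ha : ∀ i t, ∃ s, t ≤ s ∧ s ≤ t + B₁ - 1 ∧ s ∈ 𝒯 i) {T S : ℕ} {c : ℝ} (hc : 0 ≤ c)
    (hbd : ∀ r, T ≤ r → ∀ j, ‖x r j - xstar j‖ ≤ c) (hτ : ∀ j s', S ≤ s' → T ≤ τ j s')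
    (s : ℕ) (hs : S + B₁ ≤ s) (i : ι) : ‖x s i - xstar i‖ ≤ γ * c := by
  obtain ⟨u, hu₁, hu₂, hu⟩ := ha i (s - B₁)
  exact hx.norm_apply_sub_le_of_updated hγ hG hc hbd hu (by omega)
    fun s' hs' _ j => hτ j s' (by omega)

theorem IsAsyncIteration.norm_apply_sub_le_geometric (hx : IsAsyncIteration G x τ 𝒯)
    (hγ0 : 0 ≤ γ) (hγ1 : γ ≤ 1) (hG : ∀ u, ‖G u - xstar‖ ≤ γ * ‖u - xstar‖) {B₁ B₂ : ℕ}
    (hB₁ : 0 < B₁) (ha : ∀ i t, ∃ s, t ≤ s ∧ s ≤ t + B₁ - 1 ∧ s ∈ 𝒯 i)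
    (hb : ∀ j t, t < τ j t + B₂ ∧ τ j t ≤ t) (k s : ℕ) (hs : B₁ + k * (B₁ + B₂ - 1) ≤ s)
    (i : ι) : ‖x s i - xstar i‖ ≤ γ ^ (k + 1) * ‖x 0 - xstar‖ := by
  induction k generalizing s i with
  | zero =>
    simpa using hx.norm_apply_sub_le_of_window hγ0 hG hB₁ ha (T := 0) (S := 0) (norm_nonneg _)
      (fun r _ => hx.norm_apply_sub_le_initial hγ0 hγ1 hG (fun j t => (hb j t).2) r)
      (fun _ _ _ => Nat.zero_le _) s (by omega) i
  | succ k ih =>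
    rw [pow_succ', mul_assoc]
    exact hx.norm_apply_sub_le_of_window hγ0 hG hB₁ ha (T := B₁ + k * (B₁ + B₂ - 1))
      (S := B₁ + k * (B₁ + B₂ - 1) + B₂ - 1) (by positivity) ih
      (fun j s' hs' => by have := (hb j s').1; omega) s
      (by rw [Nat.succ_mul] at hs; omega) i

end AsyncIteration

theorem pow_le_rpow_one_div_rpow {γ : ℝ} (hγ0 : 0 < γ) (hγ1 : γ ≤ 1) {m a : ℝ} (hm : 0 < m)
    {k : ℕ} (ha : a ≤ k * m) : γ ^ k ≤ (γ ^ (1 / m)) ^ a := by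
  rw [← Real.rpow_mul hγ0.le, ← Real.rpow_natCast]
  exact Real.rpow_le_rpow_of_exponent_ge hγ0 hγ1 (by rw [one_div_mul_eq_div, div_le_iff₀ hm]; exact ha)

theorem async_linear_convergence_general
    (n : ℕ)
    (G : (Fin n → ℝ) → (Fin n → ℝ)) (γ : ℝ) (hγ0 : 0 < γ) (hγ1 : γ < 1)
    (hcontr : ∀ u v : Fin n → ℝ, ‖G u - G v‖ ≤ γ * ‖u - v‖)
    (xstar : Fin n → ℝ) (hfix : G xstar = xstar)
    (x : ℕ → Fin n → ℝ)                -- iterate sequence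
    (τ : Fin n → ℕ → ℕ)                -- stale indices
    (𝒯 : Fin n → Set ℕ)                -- update times of each coordinate
    (hupd : ∀ t : ℕ, ∀ i : Fin n,
      (t ∈ 𝒯 i → x (t + 1) i = G (fun j => x (τ j t) j) i) ∧
      (t ∉ 𝒯 i → x (t + 1) i = x t i))
    (B₁ B₂ : ℕ) (hB₁ : 0 < B₁) (hB₂ : 0 < B₂)
    (ha : ∀ i : Fin n, ∀ t : ℕ, ∃ s, t ≤ s ∧ s ≤ t + B₁ - 1 ∧ s ∈ 𝒯 i)
    (hb : ∀ j : Fin n, ∀ t : ℕ, t < τ j t + B₂ ∧ τ j t ≤ t) :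
    ∀ t : ℕ, B₁ ≤ t →
      ‖x t - xstar‖ ≤
        ‖x 0 - xstar‖ *
          (γ ^ ((1 : ℝ) / (B₁ + B₂ - 1))) ^ ((t : ℝ) - 2 * B₁) := by
  intro t ht
  have hG : ∀ u, ‖G u - xstar‖ ≤ γ * ‖u - xstar‖ := fun u => by
    simpa only [hfix] using hcontr u xstar
  obtain ⟨m, hm_def⟩ : ∃ m, m = B₁ + B₂ - 1 := ⟨_, rfl⟩
  obtain ⟨k, hk_def⟩ : ∃ k, k = (t - B₁) / m := ⟨_, rfl⟩
  have hm : 0 < m := by omega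
  have hkm : k * m ≤ t - B₁ := hk_def ▸ Nat.div_mul_le_self (t - B₁) m
  have hk : t - B₁ < (k + 1) * m := by rw [Nat.succ_mul, hk_def]; exact Nat.lt_div_mul_add hm
  have hdecay : ‖x t - xstar‖ ≤ γ ^ (k + 1) * ‖x 0 - xstar‖ :=
    (pi_norm_le_iff_of_nonneg (by positivity)).2 fun i =>
      IsAsyncIteration.norm_apply_sub_le_geometric hupd hγ0.le hγ1.le hG hB₁ ha hb k t
        (by rw [← hm_def]; omega) i
  have hm_cast : (m : ℝ) = B₁ + B₂ - 1 := by rw [hm_def, Nat.cast_sub (by omega)]; push_cast; ring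
  refine hdecay.trans ?_
  rw [mul_comm, ← hm_cast]
  gcongr
  refine pow_le_rpow_one_div_rpow hγ0 hγ1.le (by exact_mod_cast hm) ?_
  have : ((t - B₁ : ℕ) : ℝ) < ((k + 1) * m : ℕ) := by exact_mod_cast hk
  push_cast [Nat.cast_sub ht] at this ⊢
  linarith

/-- Convergence rate of asynchronous coordinate updates for an
ℓ∞ γ-contraction under partial asynchronism. -/
theorem async_linear_convergence
    (n : ℕ) (hn : 0 < n)
    (G : (Fin n → ℝ) → (Fin n → ℝ)) (γ : ℝ) (hγ0 : 0 < γ) (hγ1 : γ < 1)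
    (hcontr : ∀ u v : Fin n → ℝ, ‖G u - G v‖ ≤ γ * ‖u - v‖)
    (xstar : Fin n → ℝ) (hfix : G xstar = xstar)
    (x : ℕ → Fin n → ℝ)                -- iterate sequence
    (τ : Fin n → ℕ → ℕ)                -- stale indices
    (𝒯 : Fin n → Set ℕ)                -- update times of each coordinate
    (hupd : ∀ t : ℕ, ∀ i : Fin n,
      (t ∈ 𝒯 i → x (t + 1) i = G (fun j => x (τ j t) j) i) ∧
      (t ∉ 𝒯 i → x (t + 1) i = x t i))
    (B₁ B₂ : ℕ) (hB₁ : 0 < B₁) (hB₂ : 0 < B₂)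
    (ha : ∀ i : Fin n, ∀ t : ℕ, ∃ s, t ≤ s ∧ s ≤ t + B₁ - 1 ∧ s ∈ 𝒯 i)
    (hb : ∀ j : Fin n, ∀ t : ℕ, t < τ j t + B₂ ∧ τ j t ≤ t) :
    ∀ t : ℕ, B₁ ≤ t →
      ‖x t - xstar‖ ≤
        ‖x 0 - xstar‖ *
          (γ ^ ((1 : ℝ) / (B₁ + B₂ - 1))) ^ ((t : ℝ) - 2 * B₁) :=
  async_linear_convergence_general n G γ hγ0 hγ1 hcontr xstar hfix x τ 𝒯 hupd B₁ B₂ hB₁ hB₂ ha hb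
end

section
/- Under the same asynchronous coordinate-update setting with partial asynchronism, the iterates satisfy the non-expansiveness bound ‖x(t) − x*‖∞ ≤ ‖x(0) − x*‖∞ for all t ≥ 0. -/
/-!
An ℓ∞ ball around the fixed point is a product of intervals, and the contraction maps it into
itself. A box that `G` maps into itself is invariant under asynchronous updates, whatever the
delays: the delayed vector `j ↦ x (τ j t) j` takes each coordinate from an earlier iterate, so it
lies in the box, and so does every coordinate computed from it.
-/

open Set Metric

theorem mapsTo_closedBall_of_norm_sub_le {E : Type*} [SeminormedAddCommGroup E] {G : E → E}
    {γ : ℝ} (hγ : γ ≤ 1) (hG : ∀ u v, ‖G u - G v‖ ≤ γ * ‖u - v‖) {c : E} (hc : G c = c)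
    (R : ℝ) : MapsTo G (closedBall c R) (closedBall c R) := by
  intro u hu
  rw [mem_closedBall_iff_norm] at hu ⊢
  calc ‖G u - c‖ = ‖G u - G c‖ := by rw [hc]
    _ ≤ γ * ‖u - c‖ := hG u c
    _ ≤ 1 * ‖u - c‖ := by gcongr
    _ ≤ R := by rwa [one_mul]

theorem async_mem_pi_of_mapsTo {ι α : Type*} {G : (ι → α) → (ι → α)} {s : ι → Set α}
    (hG : MapsTo G (univ.pi s) (univ.pi s)) {x : ℕ → ι → α} {τ : ι → ℕ → ℕ}
    {𝒯 : ι → Set ℕ}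
    (hupd : ∀ t i, (t ∈ 𝒯 i → x (t + 1) i = G (fun j => x (τ j t) j) i) ∧
      (t ∉ 𝒯 i → x (t + 1) i = x t i))
    (hτ : ∀ j t, τ j t ≤ t) (h0 : x 0 ∈ univ.pi s) (t : ℕ) : x t ∈ univ.pi s := by
  induction t using Nat.strong_induction_on with
  | _ t ih =>
    rcases t with _ | t
    · exact h0
    have hdelayed : (fun j => x (τ j t) j) ∈ univ.pi s := fun j _ =>
      ih _ (Nat.lt_succ_of_le (hτ j t)) j trivial
    intro i _
    by_cases hi : t ∈ 𝒯 i
    · rw [(hupd t i).1 hi]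
      exact hG hdelayed i trivial
    · rw [(hupd t i).2 hi]
      exact ih t t.lt_succ_self i trivial

theorem async_nonexpansive_general
    (n : ℕ)
    (G : (Fin n → ℝ) → (Fin n → ℝ)) (γ : ℝ) (hγ1 : γ < 1)
    (hcontr : ∀ u v : Fin n → ℝ, ‖G u - G v‖ ≤ γ * ‖u - v‖)
    (xstar : Fin n → ℝ) (hfix : G xstar = xstar)
    (x : ℕ → Fin n → ℝ)
    (τ : Fin n → ℕ → ℕ)
    (𝒯 : Fin n → Set ℕ)
    (hupd : ∀ t : ℕ, ∀ i : Fin n,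
      (t ∈ 𝒯 i → x (t + 1) i = G (fun j => x (τ j t) j) i) ∧
      (t ∉ 𝒯 i → x (t + 1) i = x t i))
    (hτ : ∀ j : Fin n, ∀ t : ℕ, τ j t ≤ t) :
    ∀ t : ℕ, ‖x t - xstar‖ ≤ ‖x 0 - xstar‖ := by
  intro t
  have hbox := closedBall_pi xstar (norm_nonneg (x 0 - xstar))
  have hG := mapsTo_closedBall_of_norm_sub_le hγ1.le hcontr hfix ‖x 0 - xstar‖
  rw [hbox] at hG
  have h0 : x 0 ∈ closedBall xstar ‖x 0 - xstar‖ := mem_closedBall_iff_norm.2 le_rfl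
  rw [hbox] at h0
  have ht := async_mem_pi_of_mapsTo hG hupd hτ h0 t
  rwa [← hbox, mem_closedBall_iff_norm] at ht

/-- Non-expansiveness of asynchronous coordinate updates for an
ℓ∞ γ-contraction: the iterates never move farther from the fixed point than
the initial point. -/
theorem async_nonexpansive
    (n : ℕ) (hn : 0 < n)
    (G : (Fin n → ℝ) → (Fin n → ℝ)) (γ : ℝ) (hγ0 : 0 < γ) (hγ1 : γ < 1)
    (hcontr : ∀ u v : Fin n → ℝ, ‖G u - G v‖ ≤ γ * ‖u - v‖)
    (xstar : Fin n → ℝ) (hfix : G xstar = xstar)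
    (x : ℕ → Fin n → ℝ)
    (τ : Fin n → ℕ → ℕ)
    (𝒯 : Fin n → Set ℕ)
    (hupd : ∀ t : ℕ, ∀ i : Fin n,
      (t ∈ 𝒯 i → x (t + 1) i = G (fun j => x (τ j t) j) i) ∧
      (t ∉ 𝒯 i → x (t + 1) i = x t i))
    (hτ : ∀ j : Fin n, ∀ t : ℕ, τ j t ≤ t) :
    ∀ t : ℕ, ‖x t - xstar‖ ≤ ‖x 0 - xstar‖ :=
  async_nonexpansive_general n G γ hγ1 hcontr xstar hfix x τ 𝒯 hupd hτ
end

section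
/- Suppose for each t, |r(t) + γ·S(t) − r̄(t) − γ·P(t)| ≤ (1−γ)ε/4 where r̄(t), P(t) are the true expectations. If two sequences Q(t) and Q^E(t) in ℝ^{S×A} share the same initial point, the same coordinate selections and delays, where Q updates via Q_{i,a}(t+1) = r(t) + γS(Q̂(t)) − (1−γ)ε/4 and Q^E updates via the exact expectation Q^E_{i,a}(t+1) = r̄_i^a + γ Σ_j p_{ij}^a max_{a'} Q̂^E_{j,a'}(t) (with P(t) = Σ_j p_{i_t j}^{a_t} max_{a'} Q̂_{j,a'}(t)), then ‖Q(t) − Q^E(t)‖∞ ≤ ε/2 for all 1 ≤ t ≤ L. -/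
/-!
Compare the two iterations coordinatewise. At time `t + 1` only the coordinate `(i_t, a_t)`
changes, and there the difference is the sampling error, minus the shift `(1 - γ)ε/4`, plus
`γ` times the expected difference of the delayed maxima. Maxima and expectations with respect to a
probability vector are `1`-Lipschitz for the sup norm, so if all earlier iterates are `ε/2`-close,
the new coordinate is within `(1 - γ)ε/4 + (1 - γ)ε/4 + γ ε/2 = ε/2`.
-/

open Finset

lemma ciSup_le_ciSup_add {ι : Type*} [Finite ι] [Nonempty ι] {f g : ι → ℝ} {c : ℝ}
    (h : ∀ i, f i ≤ g i + c) : ⨆ i, f i ≤ (⨆ i, g i) + c :=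
  ciSup_le fun i => (h i).trans (add_le_add_left (le_ciSup (Finite.bddAbove_range g) i) c)

lemma abs_ciSup_sub_ciSup_le {ι : Type*} [Finite ι] [Nonempty ι] {f g : ι → ℝ} {c : ℝ}
    (h : ∀ i, |f i - g i| ≤ c) : |(⨆ i, f i) - ⨆ i, g i| ≤ c := by
  refine abs_sub_le_iff.2 ⟨sub_le_iff_le_add'.2 ?_, sub_le_iff_le_add'.2 ?_⟩
  · exact ciSup_le_ciSup_add fun i => by linarith [(abs_le.1 (h i)).2]
  · exact ciSup_le_ciSup_add fun i => by linarith [(abs_le.1 (h i)).1]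

lemma abs_sum_mul_le_of_sum_eq_one {ι : Type*} [Fintype ι] {p f : ι → ℝ} {c : ℝ}
    (hp0 : ∀ i, 0 ≤ p i) (hp1 : ∑ i, p i = 1) (hf : ∀ i, |f i| ≤ c) :
    |∑ i, p i * f i| ≤ c :=
  calc |∑ i, p i * f i|
      ≤ ∑ i, |p i * f i| := abs_sum_le_sum_abs _ _
    _ = ∑ i, p i * |f i| := by simp_rw [abs_mul, abs_of_nonneg (hp0 _)]
    _ ≤ ∑ i, p i * c := sum_le_sum fun i _ => mul_le_mul_of_nonneg_left (hf i) (hp0 i)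
    _ = c := by rw [← sum_mul, hp1, one_mul]

lemma norm_sub_le_of_eqOn_compl {ι : Type*} [Fintype ι] {u v u' v' : ι → ℝ} {i : ι} {δ : ℝ}
    (hδ : ‖u - v‖ ≤ δ) (hu : ∀ c, c ≠ i → u' c = u c) (hv : ∀ c, c ≠ i → v' c = v c)
    (hi : |u' i - v' i| ≤ δ) : ‖u' - v'‖ ≤ δ := by
  refine (pi_norm_le_iff_of_nonneg ((norm_nonneg _).trans hδ)).2 fun c => ?_
  rw [Pi.sub_apply, Real.norm_eq_abs]
  by_cases hc : c = i
  · exact hc ▸ hi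
  · rw [hu c hc, hv c hc, ← Real.norm_eq_abs]
    exact (norm_le_pi_norm (u - v) c).trans hδ

lemma norm_sub_le_of_async_update {ι : Type*} [Fintype ι] {u v : ℕ → ι → ℝ} {idx : ℕ → ι}
    {δ : ℝ} {L : ℕ} (h0 : ‖u 0 - v 0‖ ≤ δ)
    (hu : ∀ n c, c ≠ idx n → u (n + 1) c = u n c) (hv : ∀ n c, c ≠ idx n → v (n + 1) c = v n c)
    (hstep : ∀ n < L, (∀ s ≤ n, ‖u s - v s‖ ≤ δ) →
      |u (n + 1) (idx n) - v (n + 1) (idx n)| ≤ δ) :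
    ∀ t ≤ L, ‖u t - v t‖ ≤ δ := by
  intro t
  induction t using Nat.strong_induction_on with
  | _ t ih =>
    cases t with
    | zero => exact fun _ => h0
    | succ n =>
      intro hn
      have hprev : ∀ s ≤ n, ‖u s - v s‖ ≤ δ := fun s hs => ih s (by omega) (by omega)
      exact norm_sub_le_of_eqOn_compl (hprev n le_rfl) (hu n) (hv n) (hstep n hn hprev)

lemma abs_sub_add_mul_le {x y κ γ δ : ℝ} (hx : |x| ≤ κ) (hγ : 0 ≤ γ) (hy : |y| ≤ δ) :
    |x - κ + γ * y| ≤ 2 * κ + γ * δ := by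
  have hκ : 0 ≤ κ := (abs_nonneg x).trans hx
  calc |x - κ + γ * y|
      ≤ |x| + |κ| + |γ * y| := (abs_add_le _ _).trans (by gcongr; exact abs_sub _ _)
    _ ≤ 2 * κ + γ * δ := by
      rw [abs_of_nonneg hκ, abs_mul, abs_of_nonneg hγ]
      nlinarith

noncomputable def delayedMax {S A : Type*} (Q : ℕ → S × A → ℝ) (τ : S × A → ℕ → ℕ) (t : ℕ)
    (j : S) : ℝ :=
  ⨆ a', Q (τ (j, a') t) (j, a')

lemma abs_delayedMax_sub_le {S A : Type*} [Fintype S] [Fintype A] [Nonempty A]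
    {Q QE : ℕ → S × A → ℝ} {τ : S × A → ℕ → ℕ} {t : ℕ} {δ : ℝ} (hτ : ∀ c, τ c t ≤ t)
    (hclose : ∀ s ≤ t, ‖Q s - QE s‖ ≤ δ) (j : S) :
    |delayedMax Q τ t j - delayedMax QE τ t j| ≤ δ :=
  abs_ciSup_sub_ciSup_le fun a' => by
    rw [← Real.norm_eq_abs, ← Pi.sub_apply]
    exact (norm_le_pi_norm _ _).trans (hclose _ (hτ _))

theorem asyncqvi_error_control_general
    (S A : Type*) [Fintype S] [Fintype A] [Nonempty A]
    (γ : ℝ) (hγ0 : 0 < γ)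
    (ε : ℝ) (hε : 0 < ε)
    (L : ℕ)
    (p : S → A → S → ℝ)
    (hp_nonneg : ∀ i a j, 0 ≤ p i a j)
    (hp_sum : ∀ i a, ∑ j, p i a j = 1)
    (rbar : S → A → ℝ)
    (idx : ℕ → S × A)                 -- coordinate selected at time t
    (τ : S × A → ℕ → ℕ)               -- delayed indices
    (hτ : ∀ c t, τ c t ≤ t)
    (r : ℕ → ℝ) (Smp : ℕ → ℝ)         -- sampled reward / value averages
    (Q QE : ℕ → S × A → ℝ)
    (hinit : Q 0 = QE 0)
    -- updates of the sampled sequence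
    (hQ_upd : ∀ t, Q (t + 1) (idx t) = r t + γ * Smp t - (1 - γ) * ε / 4)
    (hQ_keep : ∀ t c, c ≠ idx t → Q (t + 1) c = Q t c)
    -- updates of the exact-expectation sequence (same coordinates, same delays)
    (hQE_upd : ∀ t, QE (t + 1) (idx t) =
      rbar (idx t).1 (idx t).2 +
        γ * ∑ j, p (idx t).1 (idx t).2 j * ⨆ a', QE (τ (j, a') t) (j, a'))
    (hQE_keep : ∀ t c, c ≠ idx t → QE (t + 1) c = QE t c)
    -- one-step sampling error bound, with P(t) the delayed expected max
    (herr : ∀ t, t ≤ L - 1 →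
      |r t + γ * Smp t - rbar (idx t).1 (idx t).2 -
        γ * ∑ j, p (idx t).1 (idx t).2 j * ⨆ a', Q (τ (j, a') t) (j, a')| ≤
        (1 - γ) * ε / 4) :
    ∀ t, 1 ≤ t → t ≤ L → ‖Q t - QE t‖ ≤ ε / 2 := by
  have hclose : ∀ t ≤ L, ‖Q t - QE t‖ ≤ ε / 2 := by
    refine norm_sub_le_of_async_update (by rw [hinit, sub_self, norm_zero]; positivity)
      hQ_keep hQE_keep fun n hn hprev => ?_
    have hexp :
        |∑ j, p (idx n).1 (idx n).2 j * (delayedMax Q τ n j - delayedMax QE τ n j)| ≤ ε / 2 :=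
      abs_sum_mul_le_of_sum_eq_one (hp_nonneg _ _) (hp_sum _ _)
        (abs_delayedMax_sub_le (fun c => hτ c n) hprev)
    have hsplit := abs_sub_add_mul_le (herr n (by omega)) hγ0.le hexp
    simp only [delayedMax, mul_sub, sum_sub_distrib] at hsplit
    rw [hQ_upd, hQE_upd]
    have hbudget : 2 * ((1 - γ) * ε / 4) + γ * (ε / 2) = ε / 2 := by ring
    convert hsplit.trans_eq hbudget using 2
    ring
  exact fun t _ ht => hclose t ht

/-- Error accumulation control between the sampled asynchronous
Q-iteration and its exact-expectation counterpart. -/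
theorem asyncqvi_error_control
    (S A : Type*) [Fintype S] [Fintype A] [Nonempty S] [Nonempty A]
    (γ : ℝ) (hγ0 : 0 < γ) (hγ1 : γ < 1)
    (ε : ℝ) (hε : 0 < ε)
    (L : ℕ)
    (p : S → A → S → ℝ)
    (hp_nonneg : ∀ i a j, 0 ≤ p i a j)
    (hp_sum : ∀ i a, ∑ j, p i a j = 1)
    (rbar : S → A → ℝ)
    (idx : ℕ → S × A)                 -- coordinate selected at time t
    (τ : S × A → ℕ → ℕ)               -- delayed indices
    (hτ : ∀ c t, τ c t ≤ t)
    (r : ℕ → ℝ) (Smp : ℕ → ℝ)         -- sampled reward / value averages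
    (Q QE : ℕ → S × A → ℝ)
    (hinit : Q 0 = QE 0)
    -- updates of the sampled sequence
    (hQ_upd : ∀ t, Q (t + 1) (idx t) = r t + γ * Smp t - (1 - γ) * ε / 4)
    (hQ_keep : ∀ t c, c ≠ idx t → Q (t + 1) c = Q t c)
    -- updates of the exact-expectation sequence (same coordinates, same delays)
    (hQE_upd : ∀ t, QE (t + 1) (idx t) =
      rbar (idx t).1 (idx t).2 +
        γ * ∑ j, p (idx t).1 (idx t).2 j * ⨆ a', QE (τ (j, a') t) (j, a'))
    (hQE_keep : ∀ t c, c ≠ idx t → QE (t + 1) c = QE t c)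
    -- one-step sampling error bound, with P(t) the delayed expected max
    (herr : ∀ t, t ≤ L - 1 →
      |r t + γ * Smp t - rbar (idx t).1 (idx t).2 -
        γ * ∑ j, p (idx t).1 (idx t).2 j * ⨆ a', Q (τ (j, a') t) (j, a')| ≤
        (1 - γ) * ε / 4) :
    ∀ t, 1 ≤ t → t ≤ L → ‖Q t - QE t‖ ≤ ε / 2 :=
  asyncqvi_error_control_general S A γ hγ0 ε hε L p hp_nonneg hp_sum rbar idx τ hτ r Smp Q QE hinit
    hQ_upd hQ_keep hQE_upd hQE_keep herr
end
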